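/- Let A be a binary linear code of length n and dimension K, let a ∈ F₂ⁿ, and for each i let dᵢ be the number of vectors of weight i in the coset A + a, Bᵢ the number of vectors of weight i in A⊥, and bᵢ the number of vectors of weight i in A⊥ that are orthogonal to a. Then as polynomials in X: Σᵢ dᵢ Xⁱ = 2^{K-n} Σᵢ (2bᵢ - Bᵢ)(1+X)^{n-i}(1-X)^i. -/

import Mathlib

open Polynomial

/-- Hamming weight of a vector in F₂ⁿ. -/
def wt {n : ℕ} (v : Fin n → ZMod 2) : ℕ :=
  (Finset.univ.filter fun j => v j ≠ 0).card

/-- Dual code: vectors orthogonal to every codeword. -/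
def dualSet {n : ℕ} (A : Submodule (ZMod 2) (Fin n → ZMod 2)) : Set (Fin n → ZMod 2) :=
  {u | ∀ c ∈ A, ∑ j, u j * c j = 0}

/-!
Expanding `∏ⱼ (1 + (-1)^{uⱼ} X)` coordinatewise gives
`(1 + X)^{n - wt u} (1 - X)^{wt u} = ∑ᵥ (-1)^{u·v} X^{wt v}`. Weighting by `(-1)^{u·a}` and summing
over `u ∈ A⊥` leaves, as coefficient of `X^{wt v}`, the character sum `∑_{u ∈ A⊥} (-1)^{u·(a+v)}`.
Writing the indicator of `A⊥` as `|A|⁻¹ ∑_{c ∈ A} (-1)^{u·c}` and using orthogonality of the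
characters of `F₂ⁿ`, this sum is `2ⁿ / |A|` if `v ∈ A + a` and `0` otherwise. Grouping by weight,
`∑_{u ∈ A⊥, wt u = i} (-1)^{u·a} = 2bᵢ - Bᵢ`.
-/

open Finset
open scoped Classical

lemma AddChar.map_sum_eq_prod {A M ι : Type*} [AddCommMonoid A] [CommMonoid M]
    (ψ : AddChar A M) (s : Finset ι) (f : ι → A) : ψ (∑ i ∈ s, f i) = ∏ i ∈ s, ψ (f i) := by
  induction s using Finset.induction_on with
  | empty => simp
  | insert i s hi ih => rw [sum_insert hi, prod_insert hi, AddChar.map_add_eq_mul, ih]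

abbrev signChar : AddChar (ZMod 2) ℚ := AddChar.zmodChar 2 (ζ := (-1 : ℚ)) (by norm_num)

lemma signChar_apply (t : ZMod 2) : signChar t = if t = 0 then 1 else -1 := by
  rw [AddChar.zmodChar_apply]; fin_cases t <;> rfl

lemma signChar_eq_one_iff {t : ZMod 2} : signChar t = 1 ↔ t = 0 := by
  rw [signChar_apply]; split_ifs <;> norm_num [*]

section
variable {ι : Type*} [Fintype ι]

def dotChar (w : ι → ZMod 2) : AddChar (ι → ZMod 2) ℚ where
  toFun u := signChar (w ⬝ᵥ u)
  map_zero_eq_one' := by simp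
  map_add_eq_mul' u v := by simp [dotProduct_add, AddChar.map_add_eq_mul]

lemma dotChar_apply (w u : ι → ZMod 2) : dotChar w u = signChar (w ⬝ᵥ u) := rfl

variable [DecidableEq ι]

lemma sum_submodule_signChar_dotProduct (A : Submodule (ZMod 2) (ι → ZMod 2))
    (w : ι → ZMod 2) :
    ∑ c : A, signChar (w ⬝ᵥ c) = if ∀ c ∈ A, w ⬝ᵥ c = 0 then (Fintype.card A : ℚ) else 0 := by
  let ψ := (dotChar w).compAddMonoidHom A.subtype.toAddMonoidHom
  have hψ : ψ = 0 ↔ ∀ c ∈ A, w ⬝ᵥ c = 0 := by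
    simp [ψ, AddChar.eq_zero_iff, dotChar_apply, signChar_eq_one_iff]
  have := ψ.sum_eq_ite
  rwa [if_congr hψ rfl rfl] at this

lemma sum_signChar_dotProduct (w : ι → ZMod 2) :
    ∑ u, signChar (u ⬝ᵥ w) = if w = 0 then (2 ^ Fintype.card ι : ℚ) else 0 := by
  simp_rw [dotProduct_comm _ w]
  have hw : dotChar w = 0 ↔ w = 0 := by
    simp only [AddChar.eq_zero_iff, dotChar_apply, signChar_eq_one_iff]
    refine ⟨fun h => funext fun i => ?_, fun h u => by simp [h]⟩
    simpa using h (Pi.single i 1)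
  have := (dotChar w).sum_eq_ite
  rwa [if_congr hw rfl rfl, Fintype.card_fun, ZMod.card, Nat.cast_pow, Nat.cast_ofNat] at this

end

section
variable {n : ℕ}

lemma card_mul_sum_dualSet_signChar (A : Submodule (ZMod 2) (Fin n → ZMod 2))
    (w : Fin n → ZMod 2) :
    (Fintype.card A : ℚ) * ∑ u ∈ univ.filter (· ∈ dualSet A), signChar (u ⬝ᵥ w) =
      if w ∈ A then 2 ^ n else 0 := by
  calc (Fintype.card A : ℚ) * ∑ u ∈ univ.filter (· ∈ dualSet A), signChar (u ⬝ᵥ w)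
      = ∑ u, (∑ c : A, signChar (u ⬝ᵥ c)) * signChar (u ⬝ᵥ w) := by
        simp_rw [sum_submodule_signChar_dotProduct, mul_sum, sum_filter, ite_mul, zero_mul,
          mul_comm (Fintype.card A : ℚ)]
        exact sum_congr rfl fun u _ => if_congr Iff.rfl rfl rfl
    _ = ∑ c : A, ∑ u, signChar (u ⬝ᵥ (↑c + w)) := by
        simp_rw [sum_mul, ← AddChar.map_add_eq_mul, ← dotProduct_add]
        exact sum_comm
    _ = ∑ v ∈ univ.filter (· ∈ A), if v = -w then 2 ^ n else 0 := by
        simp_rw [sum_signChar_dotProduct, Fintype.card_fin]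
        rw [sum_subtype _ (p := (· ∈ A)) (by simp)]
        exact sum_congr rfl fun c _ => if_congr add_eq_zero_iff_eq_neg rfl rfl
    _ = if w ∈ A then 2 ^ n else 0 := by
        simp [sum_ite_eq', neg_mem_iff]

lemma wt_eq_sum (v : Fin n → ZMod 2) : wt v = ∑ j, if v j = 0 then 0 else 1 := by
  simp [wt, card_filter, ite_not]

lemma sum_signChar_dotProduct_mul_X_pow_wt (u : Fin n → ZMod 2) :
    ∑ v, C (signChar (u ⬝ᵥ v)) * X ^ wt v = ∏ j, (1 + C (signChar (u j)) * X) := by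
  have hcoord (j : Fin n) : (1 + C (signChar (u j)) * X : ℚ[X]) =
      ∑ t : ZMod 2, C (signChar (u j * t)) * X ^ (if t = 0 then 0 else 1) := by
    rw [show (univ : Finset (ZMod 2)) = {0, 1} from rfl, sum_pair zero_ne_one]
    simp
  simp_rw [hcoord, Fintype.prod_sum, prod_mul_distrib, ← map_prod, ← AddChar.map_sum_eq_prod,
    prod_pow_eq_pow_sum, ← wt_eq_sum]
  rfl

lemma prod_one_add_signChar_mul_X (u : Fin n → ZMod 2) :
    ∏ j, (1 + C (signChar (u j)) * X) = ((1 + X) ^ (n - wt u) * (1 - X) ^ wt u : ℚ[X]) := by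
  have hzeros : #{j | u j = 0} = n - wt u := by
    have : #{j | u j = 0} + wt u = n := (card_filter_add_card_filter_not _).trans (by simp)
    omega
  simp_rw [signChar_apply, apply_ite C, map_neg, map_one, ite_mul, one_mul, neg_one_mul, add_ite,
    ← sub_eq_add_neg, prod_ite, prod_const, hzeros]
  rfl

lemma macWilliams_coset (A : Submodule (ZMod 2) (Fin n → ZMod 2)) (a : Fin n → ZMod 2) :
    C (Fintype.card A : ℚ) * ∑ u ∈ univ.filter (· ∈ dualSet A),
        C (signChar (u ⬝ᵥ a)) * ((1 + X) ^ (n - wt u) * (1 - X) ^ wt u) =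
      C (2 ^ n) * ∑ v ∈ univ.filter (fun v => v - a ∈ A), X ^ wt v := by
  calc _ = ∑ v, C ((Fintype.card A : ℚ) *
          ∑ u ∈ univ.filter (· ∈ dualSet A), signChar (u ⬝ᵥ (a + v))) * X ^ wt v := by
        simp_rw [← prod_one_add_signChar_mul_X, ← sum_signChar_dotProduct_mul_X_pow_wt, mul_sum,
          ← mul_assoc, ← map_mul, mul_assoc, ← AddChar.map_add_eq_mul, ← dotProduct_add, map_sum,
          sum_mul]
        exact sum_comm
    _ = ∑ v, C (if v - a ∈ A then 2 ^ n else 0) * X ^ wt v := by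
        simp_rw [card_mul_sum_dualSet_signChar, ZModModule.sub_eq_add, add_comm a]
    _ = _ := by
        simp_rw [mul_sum, sum_filter, apply_ite C, ite_mul, map_zero, zero_mul]

lemma sum_range_C_sum_filter_wt_mul (S : Finset (Fin n → ZMod 2))
    (g : (Fin n → ZMod 2) → ℚ) (P : ℕ → ℚ[X]) :
    ∑ i ∈ range (n + 1), C (∑ v ∈ S with wt v = i, g v) * P i = ∑ v ∈ S, C (g v) * P (wt v) := by
  have hwt : ∀ v ∈ S, wt v ∈ range (n + 1) := fun v _ =>
    mem_range.2 (Nat.lt_succ_of_le ((card_filter_le _ _).trans (card_fin n).le))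
  rw [← sum_fiberwise_of_maps_to hwt]
  refine sum_congr rfl fun i _ => ?_
  rw [map_sum, sum_mul]
  exact sum_congr rfl fun v hv => by rw [(mem_filter.1 hv).2]

end

lemma two_mul_card_filter_sub_card {α : Type*} (s : Finset α) (p : α → Prop) [DecidablePred p] :
    2 * (#{x ∈ s | p x} : ℚ) - #s = ∑ x ∈ s, if p x then 1 else -1 := by
  rw [sum_ite, sum_const, sum_const, ← card_filter_add_card_filter_not (s := s) p]
  simp only [nsmul_eq_mul, mul_one, mul_neg]
  push_cast
  ring

theorem assmus_mattson_coset_identity (n Kdim : ℕ)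
    (A : Submodule (ZMod 2) (Fin n → ZMod 2))
    (hK : Module.finrank (ZMod 2) A = Kdim)
    (a : Fin n → ZMod 2)
    (d B b : ℕ → ℕ)
    (hd : ∀ i, d i = {v | (∃ c ∈ A, v = c + a) ∧ wt v = i}.ncard)
    (hB : ∀ i, B i = {u | u ∈ dualSet A ∧ wt u = i}.ncard)
    (hb : ∀ i, b i = {u | u ∈ dualSet A ∧ (∑ j, u j * a j) = 0 ∧ wt u = i}.ncard) :
    ∑ i ∈ Finset.range (n + 1), Polynomial.C ((d i : ℚ)) * Polynomial.X ^ i =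
      Polynomial.C ((2 : ℚ) ^ ((Kdim : ℤ) - (n : ℤ))) *
        ∑ i ∈ Finset.range (n + 1),
          Polynomial.C (2 * (b i : ℚ) - (B i : ℚ)) *
            (1 + Polynomial.X) ^ (n - i) * (1 - Polynomial.X) ^ i := by
  have hcoset (i : ℕ) : (d i : ℚ) = ∑ v ∈ univ.filter (fun v => v - a ∈ A) with wt v = i, 1 := by
    have hmem (v : Fin n → ZMod 2) : (∃ c ∈ A, v = c + a) ↔ v - a ∈ A :=
      ⟨fun ⟨c, hc, hv⟩ => by simpa [hv] using hc, fun h => ⟨v - a, h, by simp⟩⟩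
    simp [hd, Set.ncard_eq_toFinset_card', filter_filter, hmem]
  have hdual (i : ℕ) : 2 * (b i : ℚ) - B i =
      ∑ u ∈ univ.filter (· ∈ dualSet A) with wt u = i, signChar (u ⬝ᵥ a) := by
    have hbset : {u | u ∈ dualSet A ∧ (∑ j, u j * a j) = 0 ∧ wt u = i} =
        {u | (u ∈ dualSet A ∧ wt u = i) ∧ u ⬝ᵥ a = 0} := by
      ext u
      simp only [Set.mem_ofPred_eq, dotProduct]
      tauto
    simp_rw [signChar_apply, ← two_mul_card_filter_sub_card, hb, hbset, hB,
      Set.ncard_eq_toFinset_card', Set.toFinset_ofPred, filter_filter]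
  have hcard : (Fintype.card A : ℚ) = 2 ^ Kdim := by
    rw [Module.card_eq_pow_finrank (K := ZMod 2) (V := A), ZMod.card, hK]; push_cast; rfl
  calc _ = ∑ v ∈ univ.filter (fun v => v - a ∈ A), X ^ wt v := by
        simpa [hcoset] using sum_range_C_sum_filter_wt_mul _ 1 (X ^ ·)
    _ = C ((2 : ℚ) ^ Kdim / 2 ^ n) * ∑ u ∈ univ.filter (· ∈ dualSet A),
          C (signChar (u ⬝ᵥ a)) * ((1 + X) ^ (n - wt u) * (1 - X) ^ wt u) := by
        rw [div_eq_inv_mul, C_mul, mul_assoc, ← hcard, macWilliams_coset, ← mul_assoc, ← C_mul,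
          inv_mul_cancel₀ (by positivity), C_1, one_mul]
    _ = _ := by
        simp_rw [hdual, mul_assoc, zpow_sub₀ (two_ne_zero' ℚ), zpow_natCast]
        exact congrArg _ (sum_range_C_sum_filter_wt_mul _ _ fun i => (1 + X) ^ (n - i) * (1 - X) ^ i).symm
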